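/- Let M ≥ 1 be an integer, α a real with 0 < α < 1, n₁, n₂ ≥ M integers, t₁, t₂ ≥ 0 reals, 1 ≤ j ≤ M an integer and x₂ ∈ ℤ. Then the sum ∑_{x₁∈ℤ} Q^{n₁,t₁}_{n₁-j,−1}(x₁) · [∑_{k=1}^{M} Ψ^{n₁,t₁}_{n₁-k}(x₁)·Φ^{n₂,t₂}_{n₂-k}(x₂)] converges absolutely and equals 0. -/

import Mathlib

open Complex Real MeasureTheory

noncomputable section

/-- `Ψ^{n,t}_{n-j}(x)` for `1 ≤ j ≤ M`: circle `|w| = 2` (value independent of `R > 1`). -/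
def Psi (M : ℕ) (α : ℝ) (n j : ℕ) (t : ℝ) (x : ℤ) : ℂ :=
  (2 * (π : ℂ) * I)⁻¹ * ∮ w in C((0 : ℂ), 2),
    w⁻¹ * (w * (w - 1)) ^ ((n : ℤ) - (M : ℤ)) *
      (w * (w - (α : ℂ))) ^ ((M : ℤ) - (j : ℤ)) * Complex.exp ((t : ℂ) * w) *
      w ^ (-(x + 2 * (n : ℤ) - 2 * (M : ℤ)))

/-- Integrand of the double contour integrals defining `Φ^{n,t}_{n-j}` and `Q^{n,t}_{n-j,c}`. -/
def qInt (M : ℕ) (α : ℝ) (n j : ℕ) (t : ℝ) (x : ℤ) (v z : ℂ) : ℂ :=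
  (1 + 2 * z) * (2 * v + 2 - (α : ℂ)) / ((z - v) * (z + v + 1)) *
    (1 + z) ^ (x + 2 * (n : ℤ) - 2 * (M : ℤ)) * Complex.exp (-((t : ℂ) * (z + 1))) *
    (z * (1 + z)) ^ (-((n : ℤ) - (M : ℤ))) *
    ((v + 1) * (v + 1 - (α : ℂ))) ^ (-((M : ℤ) - (j : ℤ) + 1))

/-- `Φ^{n,t}_{n-j}(x)` for `1 ≤ j ≤ M`: the `v`-contour encloses exactly `α-1` and the
`z`-contour encloses exactly `0` and `v`. -/
def Phi (M : ℕ) (α : ℝ) (n j : ℕ) (t : ℝ) (rv rz : ℝ) (x : ℤ) : ℂ :=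
  (2 * (π : ℂ) * I)⁻¹ * ∮ v in C((α : ℂ) - 1, rv),
    (2 * (π : ℂ) * I)⁻¹ *
      ((∮ z in C((0 : ℂ), rz), qInt M α n j t x v z) +
       (∮ z in C(v, rz), qInt M α n j t x v z))

/-- `Q^{n,t}_{n-j,c}(x)` for a constant point `c`: the `z`-contour encloses exactly `c`. -/
def Qpt (M : ℕ) (α : ℝ) (n j : ℕ) (t : ℝ) (rv rz : ℝ) (c : ℂ) (x : ℤ) : ℂ :=
  (2 * (π : ℂ) * I)⁻¹ * ∮ v in C((α : ℂ) - 1, rv),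
    (2 * (π : ℂ) * I)⁻¹ * ∮ z in C(c, rz), qInt M α n j t x v z

/-! Every term of the series vanishes. For `x₁ ≥ M - n₁` the `z`-integrand of `Q_{·,-1}` has no
pole at `z = -1`, since the factor `(1 + z)^(x₁ + n₁ - M)` has nonnegative exponent, so `Q`
vanishes by Cauchy's theorem. For `x₁ < M - n₁` the total power of `w` in the integrand of every
`Ψ_{n₁-k}` is nonnegative, so that integrand is entire and `Ψ` vanishes. -/

open Metric Set

theorem circleIntegral_eq_zero_of_eqOn_sphere {f g : ℂ → ℂ} {c : ℂ} {R : ℝ} (hR : 0 ≤ R)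
    (hfg : EqOn f g (sphere c R)) (hg : ∀ z ∈ closedBall c R, DifferentiableAt ℂ g z) :
    ∮ z in C(c, R), f z = 0 := by
  rw [circleIntegral.integral_congr hR hfg]
  exact Complex.circleIntegral_eq_zero_of_differentiable_on_off_countable hR countable_empty
    (fun z hz => (hg z hz).continuousAt.continuousWithinAt)
    (fun z hz => hg z (ball_subset_closedBall hz.1))

theorem Psi_eq_zero (M : ℕ) (α : ℝ) (n k : ℕ) (t : ℝ) (x : ℤ)
    (hn : M ≤ n) (hk : k ≤ M) (hx : x + n + k < 2 * M) :
    Psi M α n k t x = 0 := by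
  set a : ℤ := n - M
  set b : ℤ := M - k
  set e : ℤ := x + 2 * n - 2 * M
  set m : ℤ := -1 + a + b - e
  have ha : 0 ≤ a := by omega
  have hb : 0 ≤ b := by omega
  have hm : 0 ≤ m := by omega
  have hint : ∮ w in C((0 : ℂ), 2), w⁻¹ * (w * (w - 1)) ^ a * (w * (w - (α : ℂ))) ^ b *
      Complex.exp ((t : ℂ) * w) * w ^ (-e) = 0 := by
    refine circleIntegral_eq_zero_of_eqOn_sphere zero_le_two
      (g := fun w => w ^ m * (w - 1) ^ a * (w - (α : ℂ)) ^ b * Complex.exp ((t : ℂ) * w))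
      (fun w hw => ?_) (fun w _ => ?_)
    · have hw0 : w ≠ 0 := ne_zero_of_mem_sphere two_ne_zero ⟨w, hw⟩
      simp only [m, mul_zpow, zpow_add₀ hw0, zpow_sub₀ hw0, zpow_neg, zpow_one]
      field_simp
    · have hexp : DifferentiableAt ℂ (fun w : ℂ => Complex.exp ((t : ℂ) * w)) w := by fun_prop
      exact (((differentiableAt_id.zpow (Or.inr hm)).mul
        ((differentiableAt_id.sub_const 1).zpow (Or.inr ha))).mul
        ((differentiableAt_id.sub_const _).zpow (Or.inr hb))).mul hexp
  rw [Psi, hint, mul_zero]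

theorem circleIntegral_qInt_neg_one_eq_zero (M : ℕ) (α : ℝ) (n j : ℕ) (t : ℝ) (x : ℤ) (v : ℂ)
    {rz : ℝ} (hx : M ≤ x + n) (hrz : 0 < rz)
    (hsep : ∀ z ∈ closedBall (-1 : ℂ) rz, z ≠ 0 ∧ z - v ≠ 0 ∧ z + v + 1 ≠ 0) :
    ∮ z in C((-1 : ℂ), rz), qInt M α n j t x v z = 0 := by
  set e : ℤ := x + n - M
  have he : 0 ≤ e := by omega
  refine circleIntegral_eq_zero_of_eqOn_sphere hrz.le
    (g := fun z => (1 + 2 * z) * (2 * v + 2 - (α : ℂ)) / ((z - v) * (z + v + 1)) *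
      (1 + z) ^ e * Complex.exp (-((t : ℂ) * (z + 1))) * z ^ (-((n : ℤ) - M)) *
      ((v + 1) * (v + 1 - (α : ℂ))) ^ (-((M : ℤ) - (j : ℤ) + 1)))
    (fun z hz => ?_) (fun z hz => ?_)
  · have hz1 : 1 + z ≠ 0 := by
      rintro h
      rw [mem_sphere, dist_eq_norm, sub_neg_eq_add, add_comm, h, norm_zero] at hz
      exact hrz.ne hz
    have hpow : x + 2 * (n : ℤ) - 2 * (M : ℤ) = e + ((n : ℤ) - M) := by omega
    simp only [qInt, hpow, mul_zpow, zpow_add₀ hz1, zpow_neg]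
    field_simp
  · obtain ⟨hz0, hzv, hzv1⟩ := hsep z hz
    have hnum : DifferentiableAt ℂ (fun z : ℂ => (1 + 2 * z) * (2 * v + 2 - (α : ℂ))) z := by
      fun_prop
    have hden : DifferentiableAt ℂ (fun z : ℂ => (z - v) * (z + v + 1)) z := by fun_prop
    have hexp : DifferentiableAt ℂ (fun z : ℂ => Complex.exp (-((t : ℂ) * (z + 1)))) z := by
      fun_prop
    exact (((((hnum.div hden (mul_ne_zero hzv hzv1)).mul
      ((differentiableAt_id.const_add 1).zpow (Or.inr he))).mul hexp).mul
      (differentiableAt_id.zpow (Or.inl hz0))).mul_const _)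

theorem Qpt_neg_one_eq_zero (M : ℕ) (α : ℝ) (n j : ℕ) (t : ℝ) (x : ℤ) {rv rz : ℝ}
    (hx : M ≤ x + n) (hrv : 0 ≤ rv) (hrz : 0 < rz)
    (hα : rv + rz < α) (hα' : rv + rz < 1 - α) :
    Qpt M α n j t rv rz (-1) x = 0 := by
  have hsep : ∀ v ∈ sphere ((α : ℂ) - 1) rv, ∀ z ∈ closedBall (-1 : ℂ) rz,
      z ≠ 0 ∧ z - v ≠ 0 ∧ z + v + 1 ≠ 0 := by
    intro v hv z hz
    rw [mem_sphere, dist_eq_norm] at hv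
    rw [mem_closedBall, dist_eq_norm, sub_neg_eq_add] at hz
    refine ⟨?_, ?_, ?_⟩
    · rintro rfl
      norm_num at hz
      linarith
    · intro h
      have hsum : (z + 1) - (v - (α - 1)) = ((α : ℝ) : ℂ) := by linear_combination h
      have := norm_sub_le (z + 1) (v - (α - 1))
      rw [hsum, norm_real, norm_of_nonneg (by linarith)] at this
      linarith
    · intro h
      have hsum : (z + 1) + (v - (α - 1)) = ((1 - α : ℝ) : ℂ) := by
        push_cast
        linear_combination h
      have := norm_add_le (z + 1) (v - (α - 1))
      rw [hsum, norm_real, norm_of_nonneg (by linarith)] at this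
      linarith
  have hinner : ∮ v in C((α : ℂ) - 1, rv),
      (2 * (π : ℂ) * I)⁻¹ * ∮ z in C((-1 : ℂ), rz), qInt M α n j t x v z = 0 :=
    circleIntegral_eq_zero_of_eqOn_sphere hrv (g := fun _ => 0)
      (fun v hv => by
        simp only [circleIntegral_qInt_neg_one_eq_zero M α n j t x v hx hrz (hsep v hv),
          mul_zero])
      (fun _ _ => differentiableAt_const 0)
  rw [Qpt, hinner, mul_zero]

theorem Q_K2_relation_general
    (M : ℕ) (α : ℝ) (hα0 : 0 < α) (hα1 : α < 1)
    (n₁ n₂ : ℕ) (hn₁ : M ≤ n₁)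
    (t₁ t₂ : ℝ)
    (j : ℕ) (x₂ : ℤ) :
    ∃ ε > 0, ∀ rv rz rv' rz' : ℝ,
      0 < rv → rv < ε → 0 < rz → rz < ε → 0 < rz' → rz' < rv' → rv' < ε →
      Summable (fun x₁ : ℤ => ‖Qpt M α n₁ j t₁ rv rz (-1) x₁ *
          ∑ k ∈ Finset.Icc 1 M, Psi M α n₁ k t₁ x₁ * Phi M α n₂ k t₂ rv' rz' x₂‖) ∧
      (∑' x₁ : ℤ, Qpt M α n₁ j t₁ rv rz (-1) x₁ *
          ∑ k ∈ Finset.Icc 1 M, Psi M α n₁ k t₁ x₁ * Phi M α n₂ k t₂ rv' rz' x₂) = 0 := by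
  refine ⟨min (α / 2) ((1 - α) / 2), lt_min (by linarith) (by linarith), ?_⟩
  intro rv rz rv' rz' hrv hrvε hrz hrzε _ _ _
  have hεα := min_le_left (α / 2) ((1 - α) / 2)
  have hεα' := min_le_right (α / 2) ((1 - α) / 2)
  have hterm : ∀ x₁ : ℤ, Qpt M α n₁ j t₁ rv rz (-1) x₁ *
      ∑ k ∈ Finset.Icc 1 M, Psi M α n₁ k t₁ x₁ * Phi M α n₂ k t₂ rv' rz' x₂ = 0 := by
    intro x₁
    rcases le_or_gt (M : ℤ) (x₁ + n₁) with hx | hx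
    · rw [Qpt_neg_one_eq_zero M α n₁ j t₁ x₁ hx hrv.le hrz (by linarith) (by linarith),
        zero_mul]
    · refine mul_eq_zero_of_right _ (Finset.sum_eq_zero fun k hk => ?_)
      have hkM := (Finset.mem_Icc.mp hk).2
      rw [Psi_eq_zero M α n₁ k t₁ x₁ hn₁ hkM (by omega), zero_mul]
  simp only [hterm, norm_zero, tsum_zero, and_true]
  exact summable_zero

/-- `∑_{x₁∈ℤ} Q^{n₁,t₁}_{n₁-j,-1}(x₁) K^{(2)}((n₁,t₁),x₁;(n₂,t₂),x₂) = 0`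
with absolute convergence. -/
theorem Q_K2_relation
    (M : ℕ) (hM : 1 ≤ M) (α : ℝ) (hα0 : 0 < α) (hα1 : α < 1)
    (n₁ n₂ : ℕ) (hn₁ : M ≤ n₁) (hn₂ : M ≤ n₂)
    (t₁ t₂ : ℝ) (ht₁ : 0 ≤ t₁) (ht₂ : 0 ≤ t₂)
    (j : ℕ) (hj1 : 1 ≤ j) (hjM : j ≤ M) (x₂ : ℤ) :
    ∃ ε > 0, ∀ rv rz rv' rz' : ℝ,
      0 < rv → rv < ε → 0 < rz → rz < ε → 0 < rz' → rz' < rv' → rv' < ε →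
      Summable (fun x₁ : ℤ => ‖Qpt M α n₁ j t₁ rv rz (-1) x₁ *
          ∑ k ∈ Finset.Icc 1 M, Psi M α n₁ k t₁ x₁ * Phi M α n₂ k t₂ rv' rz' x₂‖) ∧
      (∑' x₁ : ℤ, Qpt M α n₁ j t₁ rv rz (-1) x₁ *
          ∑ k ∈ Finset.Icc 1 M, Psi M α n₁ k t₁ x₁ * Phi M α n₂ k t₂ rv' rz' x₂) = 0 :=
  Q_K2_relation_general M α hα0 hα1 n₁ n₂ hn₁ t₁ t₂ j x₂
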